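/- Let F_0 be a class of finite simple graphs that is closed under duplication and taking subdivisions. Let F be a class of weighted graphs such that (a) the underlying graph of every member of F belongs to F_0, and (b) for every G ∈ F_0 and every φ : E(G) → (0,∞), (G,φ) ∈ F. Let m be a positive integer. Then the asymptotic dimension of F is at most m − 1 if and only if there exists a function f : (0,∞) → (0,∞) such that for every ℓ > 0, every G ∈ F_0, and every function φ : E(G) → (0,ℓ], the graph (G,φ)^ℓ has an m-coloring with weak diameter in (G,φ)^ℓ at most f(ℓ). -/

import Mathlib

open scoped ENNReal

/-- The length of a walk in an edge-weighted graph: the sum of the weights of its edges. -/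
def walkLen {V : Type} {G : SimpleGraph V} (w : Sym2 V → ℝ) {x y : V} (p : G.Walk x y) : ℝ :=
  (p.edges.map w).sum

/-- The distance between two vertices of an edge-weighted graph: the infimum of the lengths
of paths between them (`⊤` if there is no such path). -/
noncomputable def wDist {V : Type} (G : SimpleGraph V) (w : Sym2 V → ℝ) (x y : V) : ℝ≥0∞ :=
  ⨅ q : {q : G.Walk x y // q.IsPath}, ENNReal.ofReal (walkLen w q.1)

lemma wDist_comm {V : Type} (G : SimpleGraph V) (w : Sym2 V → ℝ) (x y : V) :
    wDist G w x y = wDist G w y x := by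
  have key : ∀ a b : V, wDist G w a b ≤ wDist G w b a := by
    intro a b
    refine le_iInf fun q => ?_
    refine iInf_le_of_le ⟨q.1.reverse, q.2.reverse⟩ ?_
    simp [walkLen, List.sum_reverse]
  exact le_antisymm (key x y) (key y x)

/-- The power graph: two distinct vertices are adjacent iff their weighted distance
is at most `r`. -/
noncomputable def powerGraph {V : Type} (G : SimpleGraph V) (w : Sym2 V → ℝ) (r : ℝ) :
    SimpleGraph V where
  Adj x y := x ≠ y ∧ wDist G w x y ≤ ENNReal.ofReal r
  symm := ⟨by
    rintro x y ⟨hne, hle⟩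
    exact ⟨hne.symm, by rwa [wDist_comm]⟩⟩
  loopless := ⟨fun x h => h.1 rfl⟩

/-- The unit-length (hop) distance in an unweighted graph. -/
noncomputable def hopDist {V : Type} (L : SimpleGraph V) (x y : V) : ℝ≥0∞ :=
  ⨅ q : L.Walk x y, (q.length : ℝ≥0∞)

/-- Same-colour adjacency within a vertex set `A`. -/
def colorGraph {V : Type} (K : SimpleGraph V) (A : Set V) {m : ℕ} (c : V → Fin m) :
    SimpleGraph V where
  Adj x y := K.Adj x y ∧ x ∈ A ∧ y ∈ A ∧ c x = c y
  symm := ⟨by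
    rintro x y ⟨h, hx, hy, hc⟩
    exact ⟨h.symm, hy, hx, hc.symm⟩⟩
  loopless := ⟨fun x h => K.loopless.irrefl x h.1⟩

/-- The colouring `c` of the subgraph of `K` induced on `A` has weak diameter, measured by the
hop distance of `L`, at most `N`: any two vertices of a monochromatic component of `K ↾ A` are
at hop distance at most `N` in `L`. -/
def HasWeakDiamLE {V : Type} (K : SimpleGraph V) (A : Set V) (L : SimpleGraph V) {m : ℕ}
    (c : V → Fin m) (N : ℝ) : Prop :=
  ∀ x ∈ A, ∀ y ∈ A, (colorGraph K A c).Reachable x y → hopDist L x y ≤ ENNReal.ofReal N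

/-- `nbhd G w r S`: vertices joined to `S` by a path of weighted length at most `r`. -/
def nbhd {V : Type} (G : SimpleGraph V) (w : Sym2 V → ℝ) (r : ℝ) (S : Set V) : Set V :=
  {v | ∃ s ∈ S, ∃ q : G.Walk v s, q.IsPath ∧ walkLen w q ≤ r}

/-- Deleting a set of vertices (keeping them as isolated vertices of the ambient type). -/
def delVerts {V : Type} (G : SimpleGraph V) (Z : Set V) : SimpleGraph V where
  Adj x y := G.Adj x y ∧ x ∉ Z ∧ y ∉ Z
  symm := ⟨by
    rintro x y ⟨h, hx, hy⟩
    exact ⟨h.symm, hy, hx⟩⟩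
  loopless := ⟨fun x h => G.loopless.irrefl x h.1⟩

/-- A weighted graph: a finite simple graph together with positive edge weights. -/
structure WGraph : Type 1 where
  V : Type
  fin : Finite V
  G : SimpleGraph V
  w : Sym2 V → ℝ
  pos : ∀ e ∈ G.edgeSet, 0 < w e

/-- The extended metric on the vertex set of a weighted graph. -/
noncomputable def WGraph.dist (W : WGraph) : W.V → W.V → ℝ≥0∞ := wDist W.G W.w

/-- All edge weights lie in `(0, ℓ]`. -/
def WGraph.IsBounded (W : WGraph) (ℓ : ℝ) : Prop := ∀ e ∈ W.G.edgeSet, W.w e ≤ ℓ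

/-- `f` is an `n`-dimensional control function for the extended metric `d`. -/
def IsControlOn {X : Type} (d : X → X → ℝ≥0∞) (n : ℕ) (f : ℝ → ℝ) : Prop :=
  ∀ r : ℝ, 0 < r → ∃ U : Fin (n + 1) → Set (Set X),
    (∀ x : X, ∃ i, ∃ s ∈ U i, x ∈ s) ∧
    (∀ i, ∀ s ∈ U i, ∀ t ∈ U i, s ≠ t → ∀ x ∈ s, ∀ y ∈ t, ENNReal.ofReal r < d x y) ∧
    (∀ i, ∀ s ∈ U i, ∀ x ∈ s, ∀ y ∈ s, d x y ≤ ENNReal.ofReal (f r))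

/-- The asymptotic dimension of a class of weighted graphs is at most `n`. -/
def asdimLE (F : Set WGraph) (n : ℕ) : Prop :=
  ∃ f : ℝ → ℝ, (∀ x, 0 < x → 0 < f x) ∧ ∀ W ∈ F, IsControlOn W.dist n f

/-- The Assouad–Nagata dimension of a class of weighted graphs is at most `n`:
some dilation is a common `n`-dimensional control function. -/
def ANdimLE (F : Set WGraph) (n : ℕ) : Prop :=
  ∃ (f : ℝ → ℝ) (c : ℝ), 0 < c ∧ (∀ x, 0 < x → 0 < f x) ∧ (∀ x, 0 < x → f x ≤ c * x) ∧
    ∀ W ∈ F, IsControlOn W.dist n f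

/-- `H` is a minor of `G`: there are pairwise disjoint nonempty connected branch sets in `G`,
one for each vertex of `H`, with branch sets of adjacent vertices joined by an edge. -/
def IsMinorOf {α β : Type} (H : SimpleGraph β) (G : SimpleGraph α) : Prop :=
  ∃ B : β → Set α,
    (∀ h, (B h).Nonempty) ∧
    (∀ h h', h ≠ h' → Disjoint (B h) (B h')) ∧
    (∀ h, (G.induce (B h)).Connected) ∧
    (∀ h h', H.Adj h h' → ∃ a ∈ B h, ∃ b ∈ B h', G.Adj a b)
/-- A finite simple graph (with bundled vertex type). -/
structure FinGraph : Type 1 where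
  V : Type
  fin : Finite V
  G : SimpleGraph V

/-- The underlying (unweighted) finite graph of a weighted graph. -/
def WGraph.toFinGraph (W : WGraph) : FinGraph := ⟨W.V, W.fin, W.G⟩

/-- The graph obtained from `G` by subdividing the edge `uv`: the edge `uv` is replaced by a
two-edge path through one new vertex. -/
def subdivideOne {V : Type} (G : SimpleGraph V) (u v : V) : SimpleGraph (V ⊕ Unit) :=
  SimpleGraph.fromRel fun a b =>
    match a, b with
    | Sum.inl x, Sum.inl y => G.Adj x y ∧ s(x, y) ≠ s(u, v)
    | Sum.inl x, Sum.inr _ => x = u ∨ x = v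
    | _, _ => False

/-- The graph obtained from `G` by duplicating the edge `uv`: the edge `uv` is replaced by two
internally disjoint two-edge paths between `u` and `v`, through two new vertices. -/
def duplicateOne {V : Type} (G : SimpleGraph V) (u v : V) : SimpleGraph (V ⊕ Bool) :=
  SimpleGraph.fromRel fun a b =>
    match a, b with
    | Sum.inl x, Sum.inl y => G.Adj x y ∧ s(x, y) ≠ s(u, v)
    | Sum.inl x, Sum.inr _ => x = u ∨ x = v
    | _, _ => False

/-- `F0` is closed under taking subdivisions. -/
def ClosedUnderSubdivision (F0 : Set FinGraph) : Prop :=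
  ∀ A ∈ F0, ∀ u v : A.V, A.G.Adj u v →
    ∀ B : FinGraph, Nonempty (B.G ≃g subdivideOne A.G u v) → B ∈ F0

/-- `F0` is closed under duplication. -/
def ClosedUnderDuplication (F0 : Set FinGraph) : Prop :=
  ∀ A ∈ F0, ∀ u v : A.V, A.G.Adj u v →
    ∀ B : FinGraph, Nonempty (B.G ≃g duplicateOne A.G u v) → B ∈ F0

/-!
Covers at scale `ℓ` and colourings of the power graph at scale `ℓ` translate into each other.
Given a control cover at scale `ℓ`, colour each vertex by the family of a cover set containing
it: power-graph neighbours are within distance `ℓ`, so a monochromatic component stays inside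
one cover set, and a walk of weighted length `L` with all edges at most `ℓ` can be chopped into
at most `1 + 2L/ℓ` power-graph hops.

Conversely, fix `r`. Subdividing an edge and halving its weight preserves the distances between
old vertices, so repeated subdivision embeds any member of `F` isometrically into a graph of
`F₀` with all weights in `(0, r]`. There the monochromatic components of a colouring of the
power graph with weak diameter `N` have weighted diameter at most `N r` and are pairwise more
than `r` apart; pulled back, they give the cover.
-/

section WeightedDistance

open SimpleGraph

variable {V : Type} {G : SimpleGraph V} {w : Sym2 V → ℝ}

@[simp]
lemma walkLen_nil {x : V} : walkLen w (Walk.nil : G.Walk x x) = 0 := rfl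

@[simp]
lemma walkLen_cons {x y z : V} (h : G.Adj x y) (p : G.Walk y z) :
    walkLen w (Walk.cons h p) = w s(x, y) + walkLen w p := by
  simp [walkLen]

lemma walkLen_append {x y z : V} (p : G.Walk x y) (q : G.Walk y z) :
    walkLen w (p.append q) = walkLen w p + walkLen w q := by
  simp [walkLen, Walk.edges_append]

variable (hw : ∀ e ∈ G.edgeSet, 0 ≤ w e)
include hw

lemma walkLen_nonneg {x y : V} (p : G.Walk x y) : 0 ≤ walkLen w p :=
  List.sum_nonneg fun _ hx ↦ by
    obtain ⟨e, he, rfl⟩ := List.mem_map.mp hx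
    exact hw e (p.edges_subset_edgeSet he)

lemma walkLen_bypass_le [DecidableEq V] {x y : V} (p : G.Walk x y) :
    walkLen w p.bypass ≤ walkLen w p := by
  obtain ⟨l, hperm, hsub⟩ :=
    p.bypass_isPath.isTrail.edges_nodup.subperm p.edges_bypass_subset_edges
  rw [walkLen, ← (hperm.map w).sum_eq]
  refine (hsub.map w).sum_le_sum fun _ hx ↦ ?_
  obtain ⟨e, he, rfl⟩ := List.mem_map.mp hx
  exact hw e (p.edges_subset_edgeSet he)

lemma wDist_le_walkLen {x y : V} (p : G.Walk x y) :
    wDist G w x y ≤ ENNReal.ofReal (walkLen w p) := by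
  classical
  exact (iInf_le _ ⟨p.bypass, p.bypass_isPath⟩).trans
    (ENNReal.ofReal_le_ofReal (walkLen_bypass_le hw p))

lemma wDist_self (x : V) : wDist G w x x = 0 := by
  simpa using wDist_le_walkLen hw (Walk.nil : G.Walk x x)

lemma wDist_le_of_adj {x y : V} (h : G.Adj x y) :
    wDist G w x y ≤ ENNReal.ofReal (w s(x, y)) := by
  simpa using wDist_le_walkLen hw (Walk.cons h Walk.nil)

lemma wDist_triangle (x y z : V) : wDist G w x z ≤ wDist G w x y + wDist G w y z := by
  simp only [wDist, ENNReal.iInf_add, ENNReal.add_iInf]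
  refine le_iInf₂ fun q p ↦ (wDist_le_walkLen hw (p.1.append q.1)).trans ?_
  rw [walkLen_append]
  exact ENNReal.ofReal_add_le

lemma le_add_wDist_of_forall_adj {D : V → ℝ≥0∞}
    (hD : ∀ a b, G.Adj a b → D b ≤ D a + ENNReal.ofReal (w s(a, b))) (x y : V) :
    D y ≤ D x + wDist G w x y := by
  have key : ∀ {a : V} (p : G.Walk a y), D y ≤ D a + ENNReal.ofReal (walkLen w p) := by
    intro a p
    induction p with
    | nil => simp
    | @cons a b _ h p ih =>
      rw [walkLen_cons, ENNReal.ofReal_add (hw _ h) (walkLen_nonneg hw p), ← add_assoc]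
      exact ih.trans (by gcongr; exact hD a b h)
  simp only [wDist, ENNReal.add_iInf]
  exact le_iInf fun p ↦ key p.1

omit hw in
lemma exists_walkLen_lt_of_wDist_lt {x y : V} {L : ℝ} (h : wDist G w x y < ENNReal.ofReal L) :
    ∃ p : G.Walk x y, walkLen w p < L := by
  obtain ⟨p, hp⟩ := iInf_lt_iff.mp h
  exact ⟨p.1, (ENNReal.ofReal_lt_ofReal_iff'.mp hp).1⟩

end WeightedDistance

section HopDistance

open SimpleGraph

variable {V : Type}

lemma hopDist_le_length {L : SimpleGraph V} {x y : V} (q : L.Walk x y) :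
    hopDist L x y ≤ q.length :=
  iInf_le _ q

lemma hopDist_triangle (L : SimpleGraph V) (x y z : V) :
    hopDist L x z ≤ hopDist L x y + hopDist L y z := by
  simp only [hopDist, ENNReal.iInf_add, ENNReal.add_iInf]
  refine le_iInf₂ fun q p ↦ (hopDist_le_length (p.append q)).trans ?_
  simp

variable {G : SimpleGraph V} {w : Sym2 V → ℝ}

lemma hopDist_powerGraph_le_one {r : ℝ} {x y : V} (h : wDist G w x y ≤ ENNReal.ofReal r) :
    hopDist (powerGraph G w r) x y ≤ 1 := by
  by_cases hxy : x = y
  · subst hxy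
    exact (hopDist_le_length (Walk.nil : (powerGraph G w r).Walk x x)).trans (by simp)
  · have hadj : (powerGraph G w r).Adj x y := ⟨hxy, h⟩
    simpa using hopDist_le_length hadj.toWalk

variable (hw : ∀ e ∈ G.edgeSet, 0 ≤ w e)
include hw

/-- Greedy chopping of a walk: walk along it from `x` and jump in the power graph as soon as the
next edge would take the current segment beyond `ℓ`; each jump costs two hops (the segment,
then the edge) and consumes more than `ℓ` of the length. The parameter `b` is the length of the
segment already walked. -/
lemma hopDist_powerGraph_le_of_walk {ℓ : ℝ} (hℓ : 0 < ℓ)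
    (hwℓ : ∀ e ∈ G.edgeSet, w e ≤ ℓ) {x y : V} (p : G.Walk x y) {t : V} {b : ℝ}
    (hb : 0 ≤ b) (hbℓ : b ≤ ℓ)
    (htx : wDist G w t x ≤ ENNReal.ofReal b) :
    hopDist (powerGraph G w ℓ) t y ≤ ENNReal.ofReal (1 + 2 * (b + walkLen w p) / ℓ) := by
  induction p generalizing t b with
  | nil =>
    refine (hopDist_powerGraph_le_one (htx.trans (ENNReal.ofReal_le_ofReal hbℓ))).trans ?_
    rw [← ENNReal.ofReal_one]
    refine ENNReal.ofReal_le_ofReal (le_add_of_nonneg_right ?_)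
    simp only [walkLen_nil]
    positivity
  | @cons x a y h q ih =>
    have hxa := hw s(x, a) h
    have hq := walkLen_nonneg hw q
    rw [walkLen_cons]
    by_cases hcase : b + w s(x, a) ≤ ℓ
    · have hta : wDist G w t a ≤ ENNReal.ofReal (b + w s(x, a)) := by
        rw [ENNReal.ofReal_add hb hxa]
        exact (wDist_triangle hw t x a).trans (add_le_add htx (wDist_le_of_adj hw h))
      simpa only [add_assoc] using ih (by positivity) hcase hta
    · have hjump : 2 < 2 * (b + w s(x, a)) / ℓ := by
        rw [lt_div_iff₀ hℓ]
        linarith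
      have hrest :
          hopDist (powerGraph G w ℓ) a y ≤ ENNReal.ofReal (1 + 2 * walkLen w q / ℓ) := by
        simpa using ih le_rfl hℓ.le (by simp [wDist_self hw])
      calc hopDist (powerGraph G w ℓ) t y
          ≤ hopDist (powerGraph G w ℓ) t x + (hopDist (powerGraph G w ℓ) x a +
              hopDist (powerGraph G w ℓ) a y) :=
            (hopDist_triangle _ t x y).trans (add_le_add_right (hopDist_triangle _ x a y) _)
        _ ≤ 1 + (1 + ENNReal.ofReal (1 + 2 * walkLen w q / ℓ)) := by
            gcongr
            · exact hopDist_powerGraph_le_one (htx.trans (ENNReal.ofReal_le_ofReal hbℓ))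
            · exact hopDist_powerGraph_le_one
                ((wDist_le_of_adj hw h).trans (ENNReal.ofReal_le_ofReal (hwℓ _ h)))
        _ ≤ ENNReal.ofReal (1 + 2 * (b + (w s(x, a) + walkLen w q)) / ℓ) := by
            rw [← ENNReal.ofReal_one, ← ENNReal.ofReal_add zero_le_one (by positivity),
              ← ENNReal.ofReal_add zero_le_one (by positivity)]
            refine ENNReal.ofReal_le_ofReal ?_
            have : 2 * (b + (w s(x, a) + walkLen w q)) / ℓ =
                2 * (b + w s(x, a)) / ℓ + 2 * walkLen w q / ℓ := by ring
            linarith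

lemma wDist_le_hopDist_powerGraph_mul {r : ℝ} (hr : 0 < r) (x y : V) :
    wDist G w x y ≤ hopDist (powerGraph G w r) x y * ENNReal.ofReal r := by
  have key : ∀ {a : V} (q : (powerGraph G w r).Walk a y),
      wDist G w a y ≤ q.length * ENNReal.ofReal r := by
    intro a q
    induction q with
    | nil => simp [wDist_self hw]
    | @cons a b y hab q ih =>
      calc wDist G w a y ≤ wDist G w a b + wDist G w b y := wDist_triangle hw a b y
        _ ≤ ENNReal.ofReal r + q.length * ENNReal.ofReal r := add_le_add hab.2 ih
        _ = (Walk.cons hab q).length * ENNReal.ofReal r := by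
          rw [Walk.length_cons]; push_cast; ring
  rw [hopDist, ENNReal.iInf_mul_of_ne (by simpa using hr) ENNReal.ofReal_ne_top]
  exact le_iInf key

end HopDistance

section Colorings

open SimpleGraph

variable {V : Type} {m : ℕ}

lemma SimpleGraph.Reachable.apply_eq_of_forall_adj {β : Type*} {H : SimpleGraph V} {x y : V}
    (h : H.Reachable x y) {S : V → β} (hS : ∀ a b, H.Adj a b → S a = S b) : S x = S y := by
  obtain ⟨p⟩ := h
  induction p with
  | nil => rfl
  | cons h _ ih => exact (hS _ _ h).trans ih

lemma colorGraph_reachable_color_eq {K : SimpleGraph V} {A : Set V} {c : V → Fin m} {x y : V}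
    (h : (colorGraph K A c).Reachable x y) : c x = c y :=
  h.apply_eq_of_forall_adj fun _ _ hxy ↦ hxy.2.2.2

variable {G : SimpleGraph V} {w : Sym2 V → ℝ}

lemma exists_coloring_of_isControlOn (hw : ∀ e ∈ G.edgeSet, 0 ≤ w e) {ℓ : ℝ}
    (hℓ : 0 < ℓ) (hwℓ : ∀ e ∈ G.edgeSet, w e ≤ ℓ) {n : ℕ} {f : ℝ → ℝ}
    (hfℓ : 0 ≤ f ℓ) (hf : IsControlOn (wDist G w) n f) :
    ∃ c : V → Fin (n + 1), HasWeakDiamLE (powerGraph G w ℓ) Set.univ (powerGraph G w ℓ) c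
      (1 + 2 * (f ℓ + ℓ) / ℓ) := by
  obtain ⟨U, hcover, hsep, hdiam⟩ := hf ℓ hℓ
  choose c S hSU hmemS using hcover
  refine ⟨c, fun x _ y _ hxy ↦ ?_⟩
  have hS : S x = S y := hxy.apply_eq_of_forall_adj fun a b ⟨⟨_, hab⟩, _, _, hc⟩ ↦ by
    by_contra hne
    exact (hsep _ _ (hSU a) _ (hc ▸ hSU b) hne a (hmemS a) b (hmemS b)).not_ge hab
  have hxy : wDist G w x y < ENNReal.ofReal (f ℓ + ℓ) :=
    (hdiam _ _ (hSU x) x (hmemS x) y (hS ▸ hmemS y)).trans_lt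
      ((ENNReal.ofReal_lt_ofReal_iff (by positivity)).mpr (by linarith))
  obtain ⟨p, hp⟩ := exists_walkLen_lt_of_wDist_lt hxy
  refine (hopDist_powerGraph_le_of_walk hw hℓ hwℓ p le_rfl hℓ.le
    (by simp [wDist_self hw])).trans (ENNReal.ofReal_le_ofReal ?_)
  rw [zero_add]
  gcongr

lemma exists_cover_of_coloring {X : Type} {d : X → X → ℝ≥0∞}
    (hw : ∀ e ∈ G.edgeSet, 0 ≤ w e) (j : X → V)
    (hj : ∀ x y, wDist G w (j x) (j y) = d x y) {r N : ℝ} (hr : 0 < r) (hN : 0 ≤ N)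
    {c : V → Fin m}
    (hc : HasWeakDiamLE (powerGraph G w r) Set.univ (powerGraph G w r) c N) :
    ∃ U : Fin m → Set (Set X),
      (∀ x : X, ∃ i, ∃ s ∈ U i, x ∈ s) ∧
      (∀ i, ∀ s ∈ U i, ∀ t ∈ U i, s ≠ t →
        ∀ x ∈ s, ∀ y ∈ t, ENNReal.ofReal r < d x y) ∧
      (∀ i, ∀ s ∈ U i, ∀ x ∈ s, ∀ y ∈ s, d x y ≤ ENNReal.ofReal (N * r)) := by
  set K := colorGraph (powerGraph G w r) Set.univ c
  refine ⟨fun i ↦ Set.range fun a : {a // c a = i} ↦ {x | K.Reachable a (j x)}, ?_, ?_, ?_⟩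
  · exact fun x ↦ ⟨c (j x), _, ⟨⟨j x, rfl⟩, rfl⟩, Reachable.refl _⟩
  · rintro i _ ⟨⟨a, rfl⟩, rfl⟩ _ ⟨⟨b, hb⟩, rfl⟩ hne x hx y hy
    refine lt_of_not_ge fun hxy ↦ hne ?_
    have hjxy : K.Reachable (j x) (j y) := by
      by_cases heq : j x = j y
      · exact heq ▸ Reachable.refl _
      · refine Adj.reachable ⟨⟨heq, (hj x y).trans_le hxy⟩, trivial, trivial, ?_⟩
        rw [← colorGraph_reachable_color_eq hx, ← colorGraph_reachable_color_eq hy, hb]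
    have hab : K.Reachable a b := (hx.trans hjxy).trans hy.symm
    ext z
    exact ⟨hab.symm.trans, hab.trans⟩
  · rintro i _ ⟨a, rfl⟩ x hx y hy
    calc d x y = wDist G w (j x) (j y) := (hj x y).symm
      _ ≤ hopDist (powerGraph G w r) (j x) (j y) * ENNReal.ofReal r :=
        wDist_le_hopDist_powerGraph_mul hw hr _ _
      _ ≤ ENNReal.ofReal N * ENNReal.ofReal r := by
        gcongr
        exact hc _ trivial _ trivial (hx.symm.trans hy)
      _ = ENNReal.ofReal (N * r) := (ENNReal.ofReal_mul hN).symm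

end Colorings

section Subdivision

open SimpleGraph

variable {V : Type} {G : SimpleGraph V} {u v : V}

@[simp]
lemma subdivideOne_adj_inl_inl {a b : V} :
    (subdivideOne G u v).Adj (.inl a) (.inl b) ↔ G.Adj a b ∧ s(a, b) ≠ s(u, v) := by
  simp only [subdivideOne, fromRel_adj, ne_eq, Sum.inl.injEq]
  rw [Sym2.eq_swap (a := b), G.adj_comm b a, or_self]
  exact ⟨And.right, fun h ↦ ⟨h.1.ne, h⟩⟩

@[simp]
lemma subdivideOne_adj_inl_inr {a : V} {t : Unit} :
    (subdivideOne G u v).Adj (.inl a) (.inr t) ↔ a = u ∨ a = v := by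
  simp [subdivideOne]

@[simp]
lemma subdivideOne_adj_inr_inl {a : V} {t : Unit} :
    (subdivideOne G u v).Adj (.inr t) (.inl a) ↔ a = u ∨ a = v := by
  rw [adj_comm, subdivideOne_adj_inl_inr]

@[simp]
lemma subdivideOne_not_adj_inr_inr {t t' : Unit} :
    ¬ (subdivideOne G u v).Adj (.inr t) (.inr t') := by
  simp [subdivideOne]

open Classical in
/-- The new vertex is sent to `u` only to have a total map: edges through it are handled by the
first branch. -/
noncomputable def subdivideWeight (χ : Sym2 V → ℝ) (u v : V) (e : Sym2 (V ⊕ Unit)) : ℝ :=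
  if Sum.inr () ∈ e then χ s(u, v) / 2 else χ (e.map (Sum.elim id fun _ ↦ u))

variable {χ : Sym2 V → ℝ}

@[simp]
lemma subdivideWeight_map_inl (e : Sym2 V) : subdivideWeight χ u v (e.map Sum.inl) = χ e := by
  rw [subdivideWeight, if_neg (by simp), Sym2.map_map]
  simp

@[simp]
lemma subdivideWeight_inl_inl (a b : V) :
    subdivideWeight χ u v s(.inl a, .inl b) = χ s(a, b) :=
  subdivideWeight_map_inl s(a, b)

lemma subdivideWeight_of_inr_mem {e : Sym2 (V ⊕ Unit)} {t : Unit} (he : Sum.inr t ∈ e) :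
    subdivideWeight χ u v e = χ s(u, v) / 2 :=
  if_pos he

lemma subdivideOne_edge_eq_map_inl_or_inr_mem {e : Sym2 (V ⊕ Unit)}
    (he : e ∈ (subdivideOne G u v).edgeSet) :
    (∃ e₀ ∈ G.edgeSet, e₀ ≠ s(u, v) ∧ e₀.map Sum.inl = e) ∨ Sum.inr () ∈ e := by
  induction e using Sym2.ind with
  | _ z z' =>
    rcases z with a | ⟨⟩ <;> rcases z' with b | ⟨⟩
    · obtain ⟨hab, hne⟩ := subdivideOne_adj_inl_inl.mp he
      exact .inl ⟨s(a, b), hab, hne, rfl⟩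
    all_goals simp

lemma forall_subdivideWeight {P : ℝ → Prop}
    (hP : ∀ e ∈ G.edgeSet, e ≠ s(u, v) → P (χ e)) (hnew : P (χ s(u, v) / 2)) :
    ∀ e ∈ (subdivideOne G u v).edgeSet, P (subdivideWeight χ u v e) := by
  intro e he
  rcases subdivideOne_edge_eq_map_inl_or_inr_mem he with ⟨e₀, he₀, hne, rfl⟩ | hmem
  · simpa using hP e₀ he₀ hne
  · simpa [subdivideWeight_of_inr_mem hmem] using hnew

lemma subdivideWeight_nonneg (hχ : ∀ e ∈ G.edgeSet, 0 ≤ χ e) (huv : G.Adj u v) :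
    ∀ e ∈ (subdivideOne G u v).edgeSet, 0 ≤ subdivideWeight χ u v e :=
  forall_subdivideWeight (fun e he _ ↦ hχ e he) (by linarith [hχ s(u, v) huv])

lemma ofReal_half_add_ofReal_half {a : ℝ} (ha : 0 ≤ a) :
    ENNReal.ofReal (a / 2) + ENNReal.ofReal (a / 2) = ENNReal.ofReal a := by
  rw [← ENNReal.ofReal_add (by linarith) (by linarith), add_halves]

section Distances

variable (hχ : ∀ e ∈ G.edgeSet, 0 ≤ χ e) (huv : G.Adj u v)
include hχ huv

lemma wDist_le_of_mem_pair {a b : V} (ha : a = u ∨ a = v) (hb : b = u ∨ b = v) :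
    wDist G χ a b ≤ ENNReal.ofReal (χ s(u, v)) := by
  rcases ha with rfl | rfl <;> rcases hb with rfl | rfl
  · simp [wDist_self hχ]
  · exact wDist_le_of_adj hχ huv
  · rw [Sym2.eq_swap]
    exact wDist_le_of_adj hχ huv.symm
  · simp [wDist_self hχ]

/-- An edge `ab` of `G` is either an edge of the subdivision or `uv`, now a path through the new
vertex. -/
lemma wDist_subdivideOne_inl_le (x y : V) :
    wDist (subdivideOne G u v) (subdivideWeight χ u v) (.inl x) (.inl y) ≤ wDist G χ x y := by
  have hχ' := subdivideWeight_nonneg hχ huv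
  have hstep : ∀ a b, G.Adj a b →
      wDist (subdivideOne G u v) (subdivideWeight χ u v) (.inl a) (.inl b) ≤
        ENNReal.ofReal (χ s(a, b)) := by
    intro a b hab
    by_cases he : s(a, b) = s(u, v)
    · have ha : a = u ∨ a = v := Sym2.mem_iff.mp (he ▸ Sym2.mem_mk_left a b)
      have hb : b = u ∨ b = v := Sym2.mem_iff.mp (he ▸ Sym2.mem_mk_right a b)
      refine (wDist_triangle hχ' _ (.inr ()) _).trans ?_
      refine (add_le_add (wDist_le_of_adj hχ' (by simpa using ha))
        (wDist_le_of_adj hχ' (by simpa using hb))).trans_eq ?_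
      rw [subdivideWeight_of_inr_mem (Sym2.mem_mk_right _ _),
        subdivideWeight_of_inr_mem (Sym2.mem_mk_left _ _),
        ofReal_half_add_ofReal_half (hχ _ huv), he]
    · simpa using wDist_le_of_adj hχ' (subdivideOne_adj_inl_inl.mpr ⟨hab, he⟩)
  simpa [wDist_self hχ'] using le_add_wDist_of_forall_adj hχ
    (D := fun a ↦ wDist (subdivideOne G u v) (subdivideWeight χ u v) (.inl x) (.inl a))
    (fun a b hab ↦ (wDist_triangle hχ' _ (.inl a) _).trans (add_le_add_right (hstep a b hab) _))
    x y

/-- Apply `le_add_wDist_of_forall_adj` in the subdivision to the distance from `x` in `G`,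
extended to the new vertex by the distance to the nearer end of `uv` plus half its weight. -/
lemma wDist_le_wDist_subdivideOne_inl (x y : V) :
    wDist G χ x y ≤ wDist (subdivideOne G u v) (subdivideWeight χ u v) (.inl x) (.inl y) := by
  let D : V ⊕ Unit → ℝ≥0∞ := Sum.elim (wDist G χ x)
    fun _ ↦ min (wDist G χ x u) (wDist G χ x v) + ENNReal.ofReal (χ s(u, v) / 2)
  have hD : ∀ z z', (subdivideOne G u v).Adj z z' →
      D z' ≤ D z + ENNReal.ofReal (subdivideWeight χ u v s(z, z')) := by
    rintro (a | t) (b | t') h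
    · obtain ⟨hab, -⟩ := subdivideOne_adj_inl_inl.mp h
      simpa [D] using
        (wDist_triangle hχ x a b).trans (add_le_add_right (wDist_le_of_adj hχ hab) _)
    · rw [subdivideWeight_of_inr_mem (Sym2.mem_mk_right _ _)]
      refine add_le_add_left ?_ _
      rcases subdivideOne_adj_inl_inr.mp h with rfl | rfl
      · exact min_le_left _ _
      · exact min_le_right _ _
    · have hb := subdivideOne_adj_inr_inl.mp h
      rw [subdivideWeight_of_inr_mem (Sym2.mem_mk_left _ _)]
      simp only [D, Sum.elim_inl, Sum.elim_inr]
      rw [add_assoc, ofReal_half_add_ofReal_half (hχ _ huv), ← min_add_add_right]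
      exact le_min
        ((wDist_triangle hχ x u b).trans
          (add_le_add_right (wDist_le_of_mem_pair hχ huv (.inl rfl) hb) _))
        ((wDist_triangle hχ x v b).trans
          (add_le_add_right (wDist_le_of_mem_pair hχ huv (.inr rfl) hb) _))
    · exact absurd h subdivideOne_not_adj_inr_inr
  simpa [D, wDist_self hχ] using
    le_add_wDist_of_forall_adj (subdivideWeight_nonneg hχ huv) hD (.inl x) (.inl y)

lemma wDist_subdivideOne_inl (x y : V) :
    wDist (subdivideOne G u v) (subdivideWeight χ u v) (.inl x) (.inl y) = wDist G χ x y :=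
  (wDist_subdivideOne_inl_le hχ huv x y).antisymm (wDist_le_wDist_subdivideOne_inl hχ huv x y)

end Distances

lemma ncard_heavy_subdivideOne_lt [Finite V] (huv : G.Adj u v) {s : ℝ} (hs : s < χ s(u, v))
    (hle : χ s(u, v) ≤ 2 * s) :
    {e ∈ (subdivideOne G u v).edgeSet | s < subdivideWeight χ u v e}.ncard <
      {e ∈ G.edgeSet | s < χ e}.ncard := by
  have hsub : {e ∈ (subdivideOne G u v).edgeSet | s < subdivideWeight χ u v e} ⊆
      Sym2.map Sum.inl '' ({e ∈ G.edgeSet | s < χ e} \ {s(u, v)}) := by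
    rintro e ⟨he, hse⟩
    rcases subdivideOne_edge_eq_map_inl_or_inr_mem he with ⟨e₀, he₀, hne, rfl⟩ | hmem
    · exact ⟨e₀, ⟨⟨he₀, by simpa using hse⟩, hne⟩, rfl⟩
    · rw [subdivideWeight_of_inr_mem hmem] at hse
      linarith
  calc _ ≤ (Sym2.map Sum.inl '' ({e ∈ G.edgeSet | s < χ e} \ {s(u, v)})).ncard :=
        Set.ncard_le_ncard hsub (Set.toFinite _)
    _ ≤ ({e ∈ G.edgeSet | s < χ e} \ {s(u, v)}).ncard := Set.ncard_image_le (Set.toFinite _)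
    _ < _ := Set.ncard_sdiff_singleton_lt_of_mem ⟨huv, hs⟩ (Set.toFinite _)

end Subdivision

def EmbedsIsometricallyWithWeightsLE (F0 : Set FinGraph) (C : FinGraph) (χ : Sym2 C.V → ℝ)
    (s : ℝ) : Prop :=
  ∃ B ∈ F0, ∃ (ψ : Sym2 B.V → ℝ) (j : C.V → B.V),
    (∀ e ∈ B.G.edgeSet, 0 < ψ e ∧ ψ e ≤ s) ∧
    ∀ x y, wDist B.G ψ (j x) (j y) = wDist C.G χ x y

namespace EmbedsIsometricallyWithWeightsLE

variable {F0 : Set FinGraph} {s : ℝ}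

lemma of_forall_le {C : FinGraph} (hC : C ∈ F0) {χ : Sym2 C.V → ℝ}
    (hχ : ∀ e ∈ C.G.edgeSet, 0 < χ e ∧ χ e ≤ s) :
    EmbedsIsometricallyWithWeightsLE F0 C χ s :=
  ⟨C, hC, χ, id, hχ, fun _ _ ↦ rfl⟩

lemma of_isometry {C B : FinGraph} {χ : Sym2 C.V → ℝ} {ψ : Sym2 B.V → ℝ} (j : C.V → B.V)
    (hj : ∀ x y, wDist B.G ψ (j x) (j y) = wDist C.G χ x y)
    (hB : EmbedsIsometricallyWithWeightsLE F0 B ψ s) :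
    EmbedsIsometricallyWithWeightsLE F0 C χ s := by
  obtain ⟨A, hA, φ, i, hφ, hi⟩ := hB
  exact ⟨A, hA, φ, i ∘ j, hφ, fun x y ↦ (hi _ _).trans (hj x y)⟩

/-- Halving the heavy edges one at a time, each subdivision removes one edge of weight in
`(s, 2s]` and creates none. -/
lemma of_le_two_mul (hsub : ClosedUnderSubdivision F0) {C : FinGraph} (hC : C ∈ F0)
    {χ : Sym2 C.V → ℝ} (hpos : ∀ e ∈ C.G.edgeSet, 0 < χ e)
    (hle : ∀ e ∈ C.G.edgeSet, χ e ≤ 2 * s) : EmbedsIsometricallyWithWeightsLE F0 C χ s := by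
  induction hk : {e ∈ C.G.edgeSet | s < χ e}.ncard using Nat.strong_induction_on
    generalizing C with
  | _ k ih =>
    rcases em (∃ e ∈ C.G.edgeSet, s < χ e) with ⟨e, he, hse⟩ | hlight
    · induction e using Sym2.ind with
      | _ u v =>
        have := C.fin
        let C' : FinGraph := ⟨C.V ⊕ Unit, inferInstance, subdivideOne C.G u v⟩
        have hC' : C' ∈ F0 := hsub C hC u v he C' ⟨.refl⟩
        refine of_isometry Sum.inl (wDist_subdivideOne_inl (fun e he ↦ (hpos e he).le) he)
          (ih _ (hk ▸ ncard_heavy_subdivideOne_lt he hse (hle _ he)) hC' ?_ ?_ rfl)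
        · exact forall_subdivideWeight (fun e he _ ↦ hpos e he) (half_pos (hpos _ he))
        · exact forall_subdivideWeight (P := (· ≤ 2 * s)) (fun e he _ ↦ hle e he)
            (by linarith [hle _ he])
    · exact of_forall_le hC fun e he ↦ ⟨hpos e he, not_lt.mp fun h ↦ hlight ⟨e, he, h⟩⟩

lemma of_le_mul_two_pow (hsub : ClosedUnderSubdivision F0) (N : ℕ) {C : FinGraph} (hC : C ∈ F0)
    {χ : Sym2 C.V → ℝ} (hpos : ∀ e ∈ C.G.edgeSet, 0 < χ e)
    (hle : ∀ e ∈ C.G.edgeSet, χ e ≤ s * 2 ^ N) :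
    EmbedsIsometricallyWithWeightsLE F0 C χ s := by
  induction N generalizing C with
  | zero => exact of_forall_le hC fun e he ↦ ⟨hpos e he, by simpa using hle e he⟩
  | succ N ih =>
    obtain ⟨B, hB, ψ, j, hψ, hj⟩ := of_le_two_mul (s := s * 2 ^ N) hsub hC hpos
      fun e he ↦ (hle e he).trans_eq (by ring)
    exact of_isometry j hj (ih hB (fun e he ↦ (hψ e he).1) fun e he ↦ (hψ e he).2)

lemma of_pos (hsub : ClosedUnderSubdivision F0) (hs : 0 < s) {C : FinGraph} (hC : C ∈ F0)
    {χ : Sym2 C.V → ℝ} (hpos : ∀ e ∈ C.G.edgeSet, 0 < χ e) :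
    EmbedsIsometricallyWithWeightsLE F0 C χ s := by
  have := C.fin
  obtain ⟨M, hM⟩ := (Set.toFinite (χ '' C.G.edgeSet)).bddAbove
  obtain ⟨N, hN⟩ := pow_unbounded_of_one_lt (M / s) one_lt_two
  refine of_le_mul_two_pow hsub N hC hpos fun e he ↦ (hM ⟨e, he, rfl⟩).trans ?_
  rw [div_lt_iff₀ hs] at hN
  linarith

end EmbedsIsometricallyWithWeightsLE

theorem weighted_ad_wd_equiv_general (F0 : Set FinGraph)
    (hsub : ClosedUnderSubdivision F0)
    (F : Set WGraph) (hFF0 : ∀ W ∈ F, W.toFinGraph ∈ F0)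
    (hall : ∀ A ∈ F0, ∀ (φ : Sym2 A.V → ℝ) (hφ : ∀ e ∈ A.G.edgeSet, 0 < φ e),
      WGraph.mk A.V A.fin A.G φ hφ ∈ F)
    (m : ℕ) (hm : 0 < m) :
    asdimLE F (m - 1) ↔
      ∃ f : ℝ → ℝ, (∀ x, 0 < x → 0 < f x) ∧
        ∀ ℓ : ℝ, 0 < ℓ → ∀ A ∈ F0, ∀ φ : Sym2 A.V → ℝ,
          (∀ e ∈ A.G.edgeSet, 0 < φ e ∧ φ e ≤ ℓ) →
          ∃ c : A.V → Fin m,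
            HasWeakDiamLE (powerGraph A.G φ ℓ) Set.univ (powerGraph A.G φ ℓ) c (f ℓ) := by
  obtain ⟨n, rfl⟩ := Nat.exists_eq_add_one_of_ne_zero hm.ne'
  rw [Nat.add_sub_cancel]
  constructor
  · rintro ⟨f, hfpos, hf⟩
    refine ⟨fun ℓ ↦ 1 + 2 * (f ℓ + ℓ) / ℓ,
      fun ℓ hℓ ↦ by have := hfpos ℓ hℓ; positivity, fun ℓ hℓ A hA φ hφ ↦ ?_⟩
    exact exists_coloring_of_isControlOn (fun e he ↦ (hφ e he).1.le) hℓ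
      (fun e he ↦ (hφ e he).2) (hfpos ℓ hℓ).le
      (hf _ (hall A hA φ fun e he ↦ (hφ e he).1))
  · rintro ⟨f, hfpos, hcol⟩
    refine ⟨fun r ↦ f r * r, fun r hr ↦ mul_pos (hfpos r hr) hr, fun W hW r hr ↦ ?_⟩
    obtain ⟨B, hB, ψ, j, hψ, hj⟩ :=
      EmbedsIsometricallyWithWeightsLE.of_pos hsub hr (hFF0 W hW) W.pos
    obtain ⟨c, hc⟩ := hcol r hr B hB ψ hψ
    exact exists_cover_of_coloring (fun e he ↦ (hψ e he).1.le) j hj hr (hfpos r hr).le hc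

/-- Theorem (Theorem `weighted_ad_wd_equiv`): let `F₀` be closed under duplication and taking
subdivisions, and let `F` be the class of all weighted graphs with underlying graphs in `F₀`.
The asymptotic dimension of `F` is at most `m - 1` iff there is a function `f` such that for
every `ℓ > 0`, every `G ∈ F₀` and every `φ : E(G) → (0,ℓ]`, the graph `(G,φ)^ℓ` has an
`m`-colouring with weak diameter in `(G,φ)^ℓ` at most `f(ℓ)`. -/
theorem weighted_ad_wd_equiv (F0 : Set FinGraph)
    (hdup : ClosedUnderDuplication F0) (hsub : ClosedUnderSubdivision F0)
    (F : Set WGraph) (hFF0 : ∀ W ∈ F, W.toFinGraph ∈ F0)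
    (hall : ∀ A ∈ F0, ∀ (φ : Sym2 A.V → ℝ) (hφ : ∀ e ∈ A.G.edgeSet, 0 < φ e),
      WGraph.mk A.V A.fin A.G φ hφ ∈ F)
    (m : ℕ) (hm : 0 < m) :
    asdimLE F (m - 1) ↔
      ∃ f : ℝ → ℝ, (∀ x, 0 < x → 0 < f x) ∧
        ∀ ℓ : ℝ, 0 < ℓ → ∀ A ∈ F0, ∀ φ : Sym2 A.V → ℝ,
          (∀ e ∈ A.G.edgeSet, 0 < φ e ∧ φ e ≤ ℓ) →
          ∃ c : A.V → Fin m,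
            HasWeakDiamLE (powerGraph A.G φ ℓ) Set.univ (powerGraph A.G φ ℓ) c (f ℓ) :=
  weighted_ad_wd_equiv_general F0 hsub F hFF0 hall m hm
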